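/- arXiv:1511.05665 — 4 statements merged into one kernel-verified Lean document; each statement's English description precedes it below -/
import Mathlib

section
/- For a compact H-set of positive N×N matrices 𝒜 and a vector x > 0 (all coordinates positive), there exists a matrix A_max ∈ 𝒜 such that A x ≤ A_max x (coordinate-wise) for all A ∈ 𝒜. -/
/-- A vector is positive if all its coordinates are strictly positive. -/
def PosVec {M : ℕ} (x : Fin M → ℝ) : Prop := ∀ j, 0 < x j

/-- A matrix is positive if all its entries are strictly positive. -/
def PosMat {N M : ℕ} (A : Matrix (Fin N) (Fin M) ℝ) : Prop := ∀ i j, 0 < A i j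

/-- The hourglass alternative: a set of matrices is an H-set if for every
matrix `At` in the set and every positive vector `x`, assertions H1 and H2 hold. -/
def IsHSet {N M : ℕ} (𝒜 : Set (Matrix (Fin N) (Fin M) ℝ)) : Prop :=
  ∀ At ∈ 𝒜, ∀ x : Fin M → ℝ, PosVec x →
    ((∀ A ∈ 𝒜, At.mulVec x ≤ A.mulVec x) ∨
      ∃ Ab ∈ 𝒜, Ab.mulVec x ≤ At.mulVec x ∧ Ab.mulVec x ≠ At.mulVec x) ∧
    ((∀ A ∈ 𝒜, A.mulVec x ≤ At.mulVec x) ∨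
      ∃ Ab ∈ 𝒜, At.mulVec x ≤ Ab.mulVec x ∧ Ab.mulVec x ≠ At.mulVec x)

/-- The sum of the coordinates is strictly monotone for the product order, so a maximiser of it
on `s` cannot be strictly dominated and the alternative forces it to dominate everything. -/
theorem IsCompact.exists_forall_le_of_forall_le_or_exists_lt {α ι : Type*} [TopologicalSpace α]
    [Fintype ι] {s : Set α} (hs : IsCompact s) (hne : s.Nonempty) {f : α → ι → ℝ}
    (hf : ContinuousOn f s) (halt : ∀ a ∈ s, (∀ b ∈ s, f b ≤ f a) ∨ ∃ b ∈ s, f a < f b) :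
    ∃ a ∈ s, ∀ b ∈ s, f b ≤ f a := by
  have hsum : ContinuousOn (fun a => ∑ i, f a i) s :=
    continuousOn_finsetSum _ fun i _ => (continuous_apply i).comp_continuousOn hf
  obtain ⟨a, ha, hmax⟩ := hs.exists_isMaxOn hne hsum
  rcases halt a ha with hdom | ⟨b, hb, hlt⟩
  · exact ⟨a, ha, hdom⟩
  · exact absurd (hmax hb) (Fintype.sum_strictMono hlt).not_ge

theorem exists_max_matrix_general {N : ℕ} (𝒜 : Set (Matrix (Fin N) (Fin N) ℝ))
    (hne : 𝒜.Nonempty) (hH : IsHSet 𝒜)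
    (hcomp : IsCompact 𝒜) (x : Fin N → ℝ) (hx : PosVec x) :
    ∃ Amax ∈ 𝒜, ∀ A ∈ 𝒜, A.mulVec x ≤ Amax.mulVec x := by
  refine hcomp.exists_forall_le_of_forall_le_or_exists_lt hne
    (continuous_id.matrix_mulVec continuous_const).continuousOn fun At hAt => ?_
  rcases (hH At hAt x hx).2 with hdom | ⟨Ab, hAb, hle, hneq⟩
  · exact .inl hdom
  · exact .inr ⟨Ab, hAb, lt_of_le_of_ne hle hneq.symm⟩

/-- For a compact H-set of positive matrices and a positive vector `x`, there
is a matrix `Amax` in the set maximizing `A x` coordinate-wise. -/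
theorem exists_max_matrix {N : ℕ} (𝒜 : Set (Matrix (Fin N) (Fin N) ℝ))
    (hne : 𝒜.Nonempty) (hpos : ∀ A ∈ 𝒜, PosMat A) (hH : IsHSet 𝒜)
    (hcomp : IsCompact 𝒜) (x : Fin N → ℝ) (hx : PosVec x) :
    ∃ Amax ∈ 𝒜, ∀ A ∈ 𝒜, A.mulVec x ≤ Amax.mulVec x :=
  exists_max_matrix_general 𝒜 hne hH hcomp x hx
end

section
/- Every set of positive N×M matrices with independent row uncertainty (IRU-set) is an H-set. -/
namespace Matrix

variable {m n α : Type*}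

def iruSet (R : m → Set (n → α)) : Set (Matrix m n α) := {A | ∀ i, A i ∈ R i}

variable [DecidableEq m]

theorem updateRow_mem_iruSet {R : m → Set (n → α)} {A B : Matrix m n α}
    (hA : A ∈ iruSet R) (hB : B ∈ iruSet R) (i : m) :
    A.updateRow i (B i) ∈ iruSet R := by
  intro k
  rcases eq_or_ne k i with rfl | hk
  · simpa only [updateRow_self] using hB k
  · simpa only [updateRow_ne hk] using hA k

variable [Fintype n] [Ring α] [LinearOrder α]

theorem exists_mulVec_lt_of_not_le {R : m → Set (n → α)} {At A : Matrix m n α}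
    (hAt : At ∈ iruSet R) (hA : A ∈ iruSet R) {x : n → α} (h : ¬At *ᵥ x ≤ A *ᵥ x) :
    ∃ Ab ∈ iruSet R, Ab *ᵥ x < At *ᵥ x := by
  obtain ⟨i, hi⟩ : ∃ i, (A *ᵥ x) i < (At *ᵥ x) i := by
    simpa only [Pi.le_def, not_forall, not_le] using h
  refine ⟨At.updateRow i (A i), updateRow_mem_iruSet hAt hA i, ?_⟩
  rw [updateRow_mulVec]
  exact update_lt_self_iff.mpr hi

theorem forall_le_mulVec_or_exists_mulVec_lt {R : m → Set (n → α)} {At : Matrix m n α}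
    (hAt : At ∈ iruSet R) (x : n → α) :
    (∀ A ∈ iruSet R, At *ᵥ x ≤ A *ᵥ x) ∨ ∃ Ab ∈ iruSet R, Ab *ᵥ x < At *ᵥ x := by
  refine or_iff_not_imp_left.mpr fun h ↦ ?_
  push Not at h
  obtain ⟨A, hA, hle⟩ := h
  exact exists_mulVec_lt_of_not_le hAt hA hle

theorem forall_mulVec_le_or_exists_lt_mulVec [IsOrderedAddMonoid α]
    {R : m → Set (n → α)} {At : Matrix m n α}
    (hAt : At ∈ iruSet R) (x : n → α) :
    (∀ A ∈ iruSet R, A *ᵥ x ≤ At *ᵥ x) ∨ ∃ Ab ∈ iruSet R, At *ᵥ x < Ab *ᵥ x := by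
  simpa only [mulVec_neg, neg_le_neg_iff, neg_lt_neg_iff] using
    forall_le_mulVec_or_exists_mulVec_lt hAt (-x)

end Matrix

open Matrix

theorem iru_isHSet_general {N M : ℕ} (R : Fin N → Set (Fin M → ℝ))
    (𝒜 : Set (Matrix (Fin N) (Fin M) ℝ))
    (h𝒜 : ∀ A, A ∈ 𝒜 ↔ ∀ i, A i ∈ R i) :
    IsHSet 𝒜 := by
  obtain rfl : 𝒜 = iruSet R := Set.ext h𝒜
  intro At hAt x _
  refine ⟨?_, ?_⟩
  · refine (forall_le_mulVec_or_exists_mulVec_lt hAt x).imp_right ?_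
    exact fun ⟨Ab, hAb, hlt⟩ ↦ ⟨Ab, hAb, hlt.le, hlt.ne⟩
  · refine (forall_mulVec_le_or_exists_lt_mulVec hAt x).imp_right ?_
    exact fun ⟨Ab, hAb, hlt⟩ ↦ ⟨Ab, hAb, hlt.le, hlt.ne'⟩

/-- Every positive IRU-set (set of matrices with independent row uncertainty)
is an H-set. -/
theorem iru_isHSet {N M : ℕ} (R : Fin N → Set (Fin M → ℝ))
    (hpos : ∀ i, ∀ r ∈ R i, ∀ j, 0 < r j)
    (𝒜 : Set (Matrix (Fin N) (Fin M) ℝ))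
    (h𝒜 : ∀ A, A ∈ 𝒜 ↔ ∀ i, A i ∈ R i) :
    IsHSet 𝒜 :=
  iru_isHSet_general R 𝒜 h𝒜
end

section
/- If 𝒜 and ℬ are H-sets of positive N×M matrices, then their Minkowski sum 𝒜 + ℬ = {A + B : A ∈ 𝒜, B ∈ ℬ} is an H-set of positive N×M matrices. -/
open scoped Pointwise

/-- The Minkowski sum of two H-sets of positive matrices is an H-set of
positive matrices. -/
theorem hset_add {N M : ℕ} (𝒜 ℬ : Set (Matrix (Fin N) (Fin M) ℝ))
    (hA : ∀ A ∈ 𝒜, PosMat A) (hB : ∀ B ∈ ℬ, PosMat B)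
    (hHA : IsHSet 𝒜) (hHB : IsHSet ℬ) :
    IsHSet (𝒜 + ℬ) ∧ ∀ C ∈ 𝒜 + ℬ, PosMat C := by
  constructor
  · rintro Ct hCt x hx
    obtain ⟨A, hAmem, B, hBmem, rfl⟩ := hCt
    have hAx := hHA A hAmem x hx
    have hBx := hHB B hBmem x hx
    constructor
    · rcases hAx.1 with h1 | ⟨Ab, hAb, hle, hne⟩
      · rcases hBx.1 with h2 | ⟨Bb, hBb, hle, hne⟩
        · left
          rintro C ⟨A', hA', B', hB', rfl⟩
          simp only [Matrix.add_mulVec]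
          exact add_le_add (h1 A' hA') (h2 B' hB')
        · right
          refine ⟨A + Bb, ⟨A, hAmem, Bb, hBb, rfl⟩, ?_, ?_⟩
          · simp only [Matrix.add_mulVec]
            exact add_le_add le_rfl hle
          · simp only [Matrix.add_mulVec]
            intro h
            exact hne (add_left_cancel h)
      · right
        refine ⟨Ab + B, ⟨Ab, hAb, B, hBmem, rfl⟩, ?_, ?_⟩
        · simp only [Matrix.add_mulVec]
          exact add_le_add hle le_rfl
        · simp only [Matrix.add_mulVec]
          intro h
          exact hne (add_right_cancel h)
    · rcases hAx.2 with h1 | ⟨Ab, hAb, hle, hne⟩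
      · rcases hBx.2 with h2 | ⟨Bb, hBb, hle, hne⟩
        · left
          rintro C ⟨A', hA', B', hB', rfl⟩
          simp only [Matrix.add_mulVec]
          exact add_le_add (h1 A' hA') (h2 B' hB')
        · right
          refine ⟨A + Bb, ⟨A, hAmem, Bb, hBb, rfl⟩, ?_, ?_⟩
          · simp only [Matrix.add_mulVec]
            exact add_le_add le_rfl hle
          · simp only [Matrix.add_mulVec]
            intro h
            exact hne (add_left_cancel h)
      · right
        refine ⟨Ab + B, ⟨Ab, hAb, B, hBmem, rfl⟩, ?_, ?_⟩
        · simp only [Matrix.add_mulVec]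
          exact add_le_add hle le_rfl
        · simp only [Matrix.add_mulVec]
          intro h
          exact hne (add_right_cancel h)
  · rintro C ⟨A, hAmem, B, hBmem, rfl⟩ i j
    exact add_pos (hA A hAmem i j) (hB B hBmem i j)
end

section
/- Let 𝒜 be a compact H-set of positive N×N matrices, ν : ℝᴺ → ℝ a coordinate-wise monotone (non-decreasing in each coordinate on the nonnegative orthant) function, and x > 0 a vector. Then there exists A_max ∈ 𝒜 with A x ≤ A_max x for all A ∈ 𝒜, and max_{A ∈ 𝒜} ν(Ax) = ν(A_max x). -/
/-- A function `ν : ℝᴺ → ℝ` is coordinate-wise monotone (on the nonnegative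
orthant). -/
def CWMonotone {N : ℕ} (ν : (Fin N → ℝ) → ℝ) : Prop :=
  ∀ u v : Fin N → ℝ, 0 ≤ u → u ≤ v → ν u ≤ ν v

/-! Maximize the coordinate sum of `A x` over the compact set `𝒜`. By (H2), a maximizer that
failed to dominate every `A x` would be strictly dominated by some `Ā x`, whose larger coordinate
sum is impossible. Monotonicity of `ν` on the nonnegative orthant then transfers the domination to
`ν`. -/

open Matrix

theorem PosMat.mulVec_nonneg {N M : ℕ} {A : Matrix (Fin N) (Fin M) ℝ} (hA : PosMat A)
    {x : Fin M → ℝ} (hx : PosVec x) : 0 ≤ A *ᵥ x :=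
  fun i => dotProduct_nonneg_of_nonneg (fun j => (hA i j).le) fun j => (hx j).le

namespace IsHSet

variable {N M : ℕ} {𝒜 : Set (Matrix (Fin N) (Fin M) ℝ)} {x : Fin M → ℝ}

theorem forall_mulVec_le_of_isMaxOn {f : (Fin N → ℝ) → ℝ} (hf : StrictMono f) (hH : IsHSet 𝒜)
    (hx : PosVec x) {A₀ : Matrix (Fin N) (Fin M) ℝ} (hA₀ : A₀ ∈ 𝒜)
    (hmax : IsMaxOn (fun A => f (A *ᵥ x)) 𝒜 A₀) : ∀ A ∈ 𝒜, A *ᵥ x ≤ A₀ *ᵥ x := by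
  refine (hH A₀ hA₀ x hx).2.resolve_right ?_
  rintro ⟨Ab, hAb, hle, hne⟩
  exact (hf (lt_of_le_of_ne hle hne.symm)).not_ge (hmax hAb)

theorem exists_forall_mulVec_le (hH : IsHSet 𝒜) (hcomp : IsCompact 𝒜) (hne : 𝒜.Nonempty)
    (hx : PosVec x) : ∃ A₀ ∈ 𝒜, ∀ A ∈ 𝒜, A *ᵥ x ≤ A₀ *ᵥ x := by
  have hcont : Continuous fun A : Matrix (Fin N) (Fin M) ℝ => ∑ i, (A *ᵥ x) i := by fun_prop
  obtain ⟨A₀, hA₀, hmax⟩ := hcomp.exists_isMaxOn hne hcont.continuousOn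
  exact ⟨A₀, hA₀, forall_mulVec_le_of_isMaxOn Fintype.sum_strictMono hH hx hA₀ hmax⟩

end IsHSet

/-- One-step maximization: for a compact H-set of positive matrices, a
coordinate-wise monotone `ν` and a positive vector `x`, there is `Amax ∈ 𝒜`
with `A x ≤ Amax x` for all `A ∈ 𝒜`, and `ν (A x)` attains its maximum over
`𝒜` at `Amax`. -/
theorem one_step_max {N : ℕ} (𝒜 : Set (Matrix (Fin N) (Fin N) ℝ))
    (hne : 𝒜.Nonempty) (hpos : ∀ A ∈ 𝒜, PosMat A) (hH : IsHSet 𝒜)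
    (hcomp : IsCompact 𝒜) (ν : (Fin N → ℝ) → ℝ) (hν : CWMonotone ν)
    (x : Fin N → ℝ) (hx : PosVec x) :
    ∃ Amax ∈ 𝒜, (∀ A ∈ 𝒜, A.mulVec x ≤ Amax.mulVec x) ∧
      IsGreatest {r | ∃ A ∈ 𝒜, r = ν (A.mulVec x)} (ν (Amax.mulVec x)) := by
  obtain ⟨Amax, hAmax, hdom⟩ := hH.exists_forall_mulVec_le hcomp hne hx
  refine ⟨Amax, hAmax, hdom, ⟨Amax, hAmax, rfl⟩, ?_⟩
  rintro r ⟨A, hA, rfl⟩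
  exact hν _ _ ((hpos A hA).mulVec_nonneg hx) (hdom A hA)
end
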